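/- In the deeply embedded separation logic whose load rule is the frame-baked version hoare-load-frame ({F * l↦v ∧ ⟦y⟧=l} x=[y] {F * l↦v ∧ ⟦x⟧=v ∧ ⟦y⟧=l, [⊥,⊥]}) and similarly for store, the frame rule is admissible as an extended rule: if ⊢ {P} c {Q,[Qbrk,Qcon]} is provable and c does not modify program variables free in F, then ⊢ {P*F} c {Q*F,[Qbrk*F, Qcon*F]} is provable. The proof is by induction over the proof tree. -/
import Mathlib


/- Deeply embedded separation logic for While-CF extended with heap
   load (x = [y]) and store ([x] = y), whose primary load/store rules
   are the frame-baked versions. -/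

abbrev Vars := String → Int
abbrev Heap := Int → Option Int

structure PState where
  vars : Vars
  heap : Heap

abbrev Expr := Vars → Int
abbrev Assertion := PState → Prop

inductive Com : Type where
  | skip : Com
  | brk : Com
  | cont : Com
  | assign : String → Expr → Com
  /-- `load x y` is `x = [y]` for program variables x, y. -/
  | load : String → String → Com
  /-- `store x y` is `[x] = y` for program variables x, y. -/
  | store : String → String → Com
  | seq : Com → Com → Com
  | ifc : Expr → Com → Com → Com
  /-- `forloop c1 c2` is `for(;; c2) c1`. -/
  | forloop : Com → Com → Com

def updV (s : Vars) (x : String) (v : Int) : Vars :=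
  fun y => if y = x then v else s y

def aBot : Assertion := fun _ => False

def Entails (P Q : Assertion) : Prop := ∀ σ, P σ → Q σ

def hdisj (h1 h2 : Heap) : Prop := ∀ l, h1 l = none ∨ h2 l = none

def hunion (h1 h2 : Heap) : Heap := fun l => (h1 l).orElse (fun _ => h2 l)

/-- `SJoin σ1 σ2 σ`: σ = σ1 ⊕ σ2 (same variables, disjoint heap union). -/
def SJoin (σ1 σ2 σ : PState) : Prop :=
  σ1.vars = σ.vars ∧ σ2.vars = σ.vars ∧
  hdisj σ1.heap σ2.heap ∧ σ.heap = hunion σ1.heap σ2.heap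

/-- Separating conjunction. -/
def star (P F : Assertion) : Assertion :=
  fun σ => ∃ σ1 σ2, SJoin σ1 σ2 σ ∧ P σ1 ∧ F σ2

/-- The singleton heap {l ↦ v}. -/
def singleHeap (l v : Int) : Heap :=
  fun a => if a = l then some v else none

/-- The points-to assertion `l ↦ v` (exactly the singleton heap). -/
def pointsTo (l v : Int) : Assertion := fun σ => σ.heap = singleHeap l v

/-- The set of program variables possibly modified by `c`. -/
def modVars : Com → String → Prop
  | .assign x _ => fun y => y = x
  | .load x _ => fun y => y = x
  | .seq c1 c2 => fun y => modVars c1 y ∨ modVars c2 y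
  | .ifc _ c1 c2 => fun y => modVars c1 y ∨ modVars c2 y
  | .forloop c1 c2 => fun y => modVars c1 y ∨ modVars c2 y
  | _ => fun _ => False

/-- The side condition "`c` does not modify program variables freely
    occurring in `F`", rendered semantically: `F` is insensitive to
    changes of the variables that `c` may modify. -/
def FrameOK (c : Com) (F : Assertion) : Prop :=
  ∀ σ σ' : PState,
    (∀ z, ¬ modVars c z → σ.vars z = σ'.vars z) →
    σ.heap = σ'.heap → F σ → F σ'

/-- The deeply embedded separation logic: the standard control-flow
    primary rules plus the frame-baked hoare-load-frame and
    hoare-store-frame rules. -/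
inductive Provable : Assertion → Com → Assertion → Assertion → Assertion → Prop where
  | skip (P : Assertion) : Provable P .skip P aBot aBot
  | brk (P : Assertion) : Provable P .brk aBot P aBot
  | cont (P : Assertion) : Provable P .cont aBot aBot P
  | assign (P : Assertion) (x : String) (e : Expr) :
      Provable (fun σ => P ⟨updV σ.vars x (e σ.vars), σ.heap⟩)
        (.assign x e) P aBot aBot
  | load (F : Assertion) (l v : Int) (x y : String) :
      Provable
        (star F (fun σ => pointsTo l v σ ∧ σ.vars y = l))
        (.load x y)
        (star F (fun σ => pointsTo l v σ ∧ σ.vars x = v ∧ σ.vars y = l))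
        aBot aBot
  | store (F : Assertion) (l v u : Int) (x y : String) :
      Provable
        (star F (fun σ => pointsTo l v σ ∧ σ.vars x = l ∧ σ.vars y = u))
        (.store x y)
        (star F (fun σ => pointsTo l u σ ∧ σ.vars x = l ∧ σ.vars y = u))
        aBot aBot
  | seq (P Q' Q Rb Rc : Assertion) (c1 c2 : Com) :
      Provable P c1 Q' Rb Rc → Provable Q' c2 Q Rb Rc →
      Provable P (.seq c1 c2) Q Rb Rc
  | ifc (P Q Rb Rc : Assertion) (e : Expr) (c1 c2 : Com) :
      Provable (fun σ => P σ ∧ e σ.vars ≠ 0) c1 Q Rb Rc →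
      Provable (fun σ => P σ ∧ e σ.vars = 0) c2 Q Rb Rc →
      Provable P (.ifc e c1 c2) Q Rb Rc
  | loop (P I Q : Assertion) (c1 c2 : Com) :
      Provable P c1 I Q I → Provable I c2 P Q aBot →
      Provable P (.forloop c1 c2) Q aBot aBot
  | conseq (P P' Q Q' Rb Rb' Rc Rc' : Assertion) (c : Com) :
      Provable P' c Q' Rb' Rc' →
      Entails P P' → Entails Q' Q → Entails Rb' Rb → Entails Rc' Rc →
      Provable P c Q Rb Rc


lemma entails_bot_any (R : Assertion) : Entails aBot R := fun _ h => h.elim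

lemma entails_star_bot (F R : Assertion) : Entails (star aBot F) R :=
  fun _ ⟨_, _, _, h, _⟩ => h.elim

lemma entails_star_mono_left {P P' : Assertion} (F : Assertion)
    (h : Entails P P') : Entails (star P F) (star P' F) :=
  fun _ ⟨σ1, σ2, hj, hP, hFx⟩ => ⟨σ1, σ2, hj, h _ hP, hFx⟩

lemma hunion_none {h1 h2 : Heap} {l : Int} (h : h1 l = none) :
    hunion h1 h2 l = h2 l := by unfold hunion; rw [h]; rfl

lemma hunion_some {h1 h2 : Heap} {l v : Int} (h : h1 l = some v) :
    hunion h1 h2 l = some v := by unfold hunion; rw [h]; rfl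

lemma hunion_eq_none {h1 h2 : Heap} {l : Int} (h : hunion h1 h2 l = none) :
    h1 l = none ∧ h2 l = none := by
  cases e : h1 l with
  | none => exact ⟨rfl, by rwa [hunion_none e] at h⟩
  | some v => rw [hunion_some e] at h; exact absurd h (by simp)

lemma hunion_rot {h1 h2 h3 : Heap} (d123 : hdisj (hunion h1 h2) h3) :
    hunion (hunion h1 h2) h3 = hunion (hunion h1 h3) h2 := by
  funext l
  cases e1 : h1 l with
  | some v =>
    rw [hunion_some (show hunion h1 h2 l = some v from hunion_some e1),
        hunion_some (show hunion h1 h3 l = some v from hunion_some e1)]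
  | none =>
    have L : hunion h1 h2 l = h2 l := hunion_none e1
    have R : hunion h1 h3 l = h3 l := hunion_none e1
    cases e2 : h2 l with
    | none =>
      rw [hunion_none (L.trans e2)]
      cases e3 : h3 l with
      | none => rw [hunion_none (R.trans e3), e2]
      | some w => rw [hunion_some (R.trans e3)]
    | some w2 =>
      have e3 : h3 l = none := by
        rcases d123 l with h | h
        · rw [L, e2] at h; cases h
        · exact h
      rw [hunion_some (L.trans e2), hunion_none (R.trans e3), e2]

lemma star_rot (X Y Z : Assertion) :
    Entails (star (star X Y) Z) (star (star X Z) Y) := by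
  rintro σ ⟨σ12, σ3, ⟨hv12, hv3, hd123, hh⟩, ⟨σ1, σ2, ⟨hv1, hv2, hd12, hh12⟩, hX, hY⟩, hZ⟩
  have hv1' : σ1.vars = σ.vars := hv1.trans hv12
  have hv2' : σ2.vars = σ.vars := hv2.trans hv12
  have hd123' : hdisj (hunion σ1.heap σ2.heap) σ3.heap := hh12 ▸ hd123
  refine ⟨⟨σ.vars, hunion σ1.heap σ3.heap⟩, σ2, ⟨rfl, hv2', ?_, ?_⟩,
    ⟨σ1, σ3, ⟨hv1', hv3, ?_, rfl⟩, hX, hZ⟩, hY⟩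
  · show hdisj (hunion σ1.heap σ3.heap) σ2.heap
    intro l
    rcases hd12 l with h1n | h2n
    · rcases hd123' l with h12n | h3n
      · right; exact (hunion_eq_none h12n).2
      · left; rw [hunion_none h1n]; exact h3n
    · right; exact h2n
  · show σ.heap = hunion (hunion σ1.heap σ3.heap) σ2.heap
    rw [hh, hh12]
    exact hunion_rot hd123'
  · intro l
    rcases hd123' l with h12n | h3n
    · left; exact (hunion_eq_none h12n).1
    · right; exact h3n

lemma frameOK_mono {c c' : Com} {F : Assertion}
    (hsub : ∀ z, modVars c' z → modVars c z)
    (h : FrameOK c F) : FrameOK c' F := by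
  intro σ σ' hv hh hFσ
  exact h σ σ' (fun z hz => hv z (fun hz' => hz (hsub z hz'))) hh hFσ

/-- in the deeply embedded separation logic whose
    load/store rules are frame-baked, the frame rule is admissible as an
    extended rule: if ⊢ {P} c {Q,[Qbrk,Qcon]} is provable and c does not
    modify program variables free in F, then
    ⊢ {P*F} c {Q*F,[Qbrk*F,Qcon*F]} is provable. -/
theorem frame_deep (P Q Qbrk Qcon F : Assertion) (c : Com)
    (h : Provable P c Q Qbrk Qcon)
    (hF : FrameOK c F) :
    Provable (star P F) c (star Q F) (star Qbrk F) (star Qcon F) := by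
  induction h with
  | skip P =>
      exact .conseq _ _ _ _ _ _ _ _ _ (.skip (star P F))
        (fun _ h => h) (fun _ h => h) (entails_bot_any _) (entails_bot_any _)
  | brk P =>
      exact .conseq _ _ _ _ _ _ _ _ _ (.brk (star P F))
        (fun _ h => h) (entails_bot_any _) (fun _ h => h) (entails_bot_any _)
  | cont P =>
      exact .conseq _ _ _ _ _ _ _ _ _ (.cont (star P F))
        (fun _ h => h) (entails_bot_any _) (entails_bot_any _) (fun _ h => h)
  | assign P x e =>
      refine .conseq _ _ _ _ _ _ _ _ _ (.assign (star P F) x e)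
        ?_ (fun _ h => h) (entails_bot_any _) (entails_bot_any _)
      rintro σ ⟨σ1, σ2, ⟨hv1, hv2, hd, hh⟩, hP, hFx⟩
      refine ⟨⟨updV σ1.vars x (e σ.vars), σ1.heap⟩,
              ⟨updV σ2.vars x (e σ.vars), σ2.heap⟩,
              ⟨?_, ?_, hd, hh⟩, ?_, ?_⟩
      · funext z; simp [updV, hv1]
      · funext z; simp [updV, hv2]
      · have : updV σ1.vars x (e σ.vars) = updV σ1.vars x (e σ1.vars) := by
          rw [hv1]
        rw [this]; exact hP
      · refine hF σ2 _ ?_ rfl hFx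
        intro z hz
        simp only [modVars] at hz
        simp [updV, hz]
  | load F0 l v x y =>
      refine .conseq _ _ _ _ _ _ _ _ _ (.load (star F0 F) l v x y)
        ?_ ?_ (entails_bot_any _) (entails_bot_any _)
      · exact star_rot F0 _ F
      · exact star_rot F0 F _
  | store F0 l v u x y =>
      refine .conseq _ _ _ _ _ _ _ _ _ (.store (star F0 F) l v u x y)
        ?_ ?_ (entails_bot_any _) (entails_bot_any _)
      · exact star_rot F0 _ F
      · exact star_rot F0 F _
  | seq P Q' Q Rb Rc c1 c2 h1 h2 ih1 ih2 =>
      exact .seq _ _ _ _ _ _ _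
        (ih1 (frameOK_mono (c := .seq c1 c2) (c' := c1) (fun _ hz => Or.inl hz) hF))
        (ih2 (frameOK_mono (c := .seq c1 c2) (c' := c2) (fun _ hz => Or.inr hz) hF))
  | ifc P Q Rb Rc e c1 c2 h1 h2 ih1 ih2 =>
      have hF1 := frameOK_mono (c := .ifc e c1 c2) (c' := c1) (fun _ hz => Or.inl hz) hF
      have hF2 := frameOK_mono (c := .ifc e c1 c2) (c' := c2) (fun _ hz => Or.inr hz) hF
      refine .ifc _ _ _ _ _ _ _ ?_ ?_
      · refine .conseq _ _ _ _ _ _ _ _ _ (ih1 hF1) ?_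
          (fun _ h => h) (fun _ h => h) (fun _ h => h)
        rintro σ ⟨⟨σ1, σ2, hj, hP, hFx⟩, he⟩
        exact ⟨σ1, σ2, hj, ⟨hP, by rwa [hj.1]⟩, hFx⟩
      · refine .conseq _ _ _ _ _ _ _ _ _ (ih2 hF2) ?_
          (fun _ h => h) (fun _ h => h) (fun _ h => h)
        rintro σ ⟨⟨σ1, σ2, hj, hP, hFx⟩, he⟩
        exact ⟨σ1, σ2, hj, ⟨hP, by rwa [hj.1]⟩, hFx⟩
  | loop P I Q c1 c2 h1 h2 ih1 ih2 =>
      have hF1 := frameOK_mono (c := .forloop c1 c2) (c' := c1) (fun _ hz => Or.inl hz) hF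
      have hF2 := frameOK_mono (c := .forloop c1 c2) (c' := c2) (fun _ hz => Or.inr hz) hF
      refine .conseq _ _ _ _ _ _ _ _ _
        (.loop (star P F) (star I F) (star Q F) c1 c2 (ih1 hF1)
          (.conseq _ _ _ _ _ _ _ _ _ (ih2 hF2)
            (fun _ h => h) (fun _ h => h) (fun _ h => h) (entails_star_bot _ _)))
        (fun _ h => h) (fun _ h => h) (entails_bot_any _) (entails_bot_any _)
  | conseq P P' Q Q' Rb Rb' Rc Rc' c hp hP hQ hRb hRc ih =>
      exact .conseq _ _ _ _ _ _ _ _ _ (ih hF)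
        (entails_star_mono_left F hP) (entails_star_mono_left F hQ)
        (entails_star_mono_left F hRb) (entails_star_mono_left F hRc)
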